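/- arXiv:math/0701055 — 3 statements merged into one kernel-verified Lean document; each statement's English description precedes it below -/
import Mathlib

section
/- For every n ≥ 0 and all z, w ∈ ℂ with z ≠ w, the Poisson bracket {Φ_n(z), Φ_n^*(w)} = (i·w/(z−w))·(Φ_n(z)·Φ_n^*(w) − Φ_n(w)·Φ_n^*(z)). -/
open Complex

/-- Derivative of `f` in the direction of the real part of the `k`-th variable α_k. -/
noncomputable def duDeriv (k : ℕ) (f : (ℕ → ℂ) → ℂ) (a : ℕ → ℂ) : ℂ :=
  deriv (fun t : ℝ => f (Function.update a k (a k + (t : ℂ)))) 0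

/-- Derivative of `f` in the direction of the imaginary part of the `k`-th variable α_k. -/
noncomputable def dvDeriv (k : ℕ) (f : (ℕ → ℂ) → ℂ) (a : ℕ → ℂ) : ℂ :=
  deriv (fun t : ℝ => f (Function.update a k (a k + (t : ℂ) * Complex.I))) 0

/-- Wirtinger derivative ∂f/∂α_k = (1/2)(∂/∂u_k − i·∂/∂v_k). -/
noncomputable def dAlpha (k : ℕ) (f : (ℕ → ℂ) → ℂ) (a : ℕ → ℂ) : ℂ :=
  (1 / 2) * (duDeriv k f a - Complex.I * dvDeriv k f a)

/-- Wirtinger derivative ∂f/∂conj(α_k) = (1/2)(∂/∂u_k + i·∂/∂v_k). -/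
noncomputable def dAlphaBar (k : ℕ) (f : (ℕ → ℂ) → ℂ) (a : ℕ → ℂ) : ℂ :=
  (1 / 2) * (duDeriv k f a + Complex.I * dvDeriv k f a)

/-- The Poisson bracket
{f,g} = i·Σ_k (1 − |α_k|²)·[(∂f/∂conj(α_k))·(∂g/∂α_k) − (∂f/∂α_k)·(∂g/∂conj(α_k))]. -/
noncomputable def pb (f g : (ℕ → ℂ) → ℂ) (a : ℕ → ℂ) : ℂ :=
  Complex.I * ∑' k : ℕ, (1 - (Complex.normSq (a k) : ℂ)) *
    (dAlphaBar k f a * dAlpha k g a - dAlpha k f a * dAlphaBar k g a)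

/-- The pair (Φ_n(z), Φ_n^*(z)) as a function of the Verblunsky coefficients:
Φ_0 = Φ_0^* = 1, Φ_{n+1}(z) = z·Φ_n(z) − conj(α_n)·Φ_n^*(z),
Φ_{n+1}^*(z) = Φ_n^*(z) − α_n·z·Φ_n(z). -/
noncomputable def PhiP : ℕ → ℂ → (ℕ → ℂ) → ℂ × ℂ
  | 0, _, _ => (1, 1)
  | n + 1, z, a =>
      (z * (PhiP n z a).1 - (starRingEnd ℂ) (a n) * (PhiP n z a).2,
       (PhiP n z a).2 - a n * z * (PhiP n z a).1)

/-- The monic orthogonal polynomial Φ_n(z). -/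
noncomputable def Phi (n : ℕ) (z : ℂ) (a : ℕ → ℂ) : ℂ := (PhiP n z a).1

/-- The reversed polynomial Φ_n^*(z). -/
noncomputable def PhiStar (n : ℕ) (z : ℂ) (a : ℕ → ℂ) : ℂ := (PhiP n z a).2

/-- The second kind polynomial Ψ_n(z): same recurrence with every α_k replaced by −α_k. -/
noncomputable def Psi (n : ℕ) (z : ℂ) (a : ℕ → ℂ) : ℂ := Phi n z (fun k => - a k)

/-- The reversed second kind polynomial Ψ_n^*(z). -/
noncomputable def PsiStar (n : ℕ) (z : ℂ) (a : ℕ → ℂ) : ℂ := PhiStar n z (fun k => - a k)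


section Aux
open Finset
lemma deriv_affine (A B : ℂ) :
    deriv (fun t : ℝ => A + B * (t : ℂ)) 0 = B := by
  have h1 : HasDerivAt (fun t : ℝ => (t : ℂ)) 1 0 := by
    simpa using (hasDerivAt_id (0:ℝ)).ofReal_comp
  have h : HasDerivAt (fun t : ℝ => A + B * (t : ℂ)) B 0 := by
    simpa using (h1.const_mul B).const_add A
  exact h.deriv

lemma wirtinger_affine (k : ℕ) (a : ℕ → ℂ) (f : (ℕ → ℂ) → ℂ) (A B C : ℂ)
    (h : ∀ c, f (Function.update a k c) = A + B * c + C * (starRingEnd ℂ) c) :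
    dAlpha k f a = B ∧ dAlphaBar k f a = C := by
  have hu : duDeriv k f a = B + C := by
    unfold duDeriv
    have he : (fun t : ℝ => f (Function.update a k (a k + (t : ℂ)))) =
        fun t : ℝ => (A + B * a k + C * (starRingEnd ℂ) (a k)) + (B + C) * (t : ℂ) := by
      funext t
      rw [h]
      simp only [map_add, Complex.conj_ofReal]
      ring
    rw [he, deriv_affine]
  have hv : dvDeriv k f a = (B - C) * Complex.I := by
    unfold dvDeriv
    have he : (fun t : ℝ => f (Function.update a k (a k + (t : ℂ) * Complex.I))) =
        fun t : ℝ => (A + B * a k + C * (starRingEnd ℂ) (a k)) + ((B - C) * Complex.I) * (t : ℂ) := by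
      funext t
      rw [h]
      simp only [map_add, map_mul, Complex.conj_ofReal, Complex.conj_I]
      ring
    rw [he, deriv_affine]
  constructor
  · unfold dAlpha
    rw [hu, hv]
    linear_combination (-(1/2 : ℂ) * (B - C)) * Complex.I_sq
  · unfold dAlphaBar
    rw [hu, hv]
    linear_combination ((1/2 : ℂ) * (B - C)) * Complex.I_sq

noncomputable def DPd (z : ℂ) (k : ℕ) : ℕ → (ℕ → ℂ) → ℂ × ℂ
  | 0, _ => (0, 0)
  | n + 1, a =>
      (z * (DPd z k n a).1 - (starRingEnd ℂ) (a n) * (DPd z k n a).2,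
       (DPd z k n a).2 - a n * z * (DPd z k n a).1
         - (if k = n then z * (PhiP n z a).1 else 0))

noncomputable def DBd (z : ℂ) (k : ℕ) : ℕ → (ℕ → ℂ) → ℂ × ℂ
  | 0, _ => (0, 0)
  | n + 1, a =>
      (z * (DBd z k n a).1 - (starRingEnd ℂ) (a n) * (DBd z k n a).2
         - (if k = n then (PhiP n z a).2 else 0),
       (DBd z k n a).2 - a n * z * (DBd z k n a).1)

lemma DPd_eq_zero (z : ℂ) (k : ℕ) : ∀ n, n ≤ k → ∀ a, DPd z k n a = (0, 0)
  | 0, _, a => rfl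
  | n + 1, h, a => by
    have hkn : k ≠ n := by omega
    have ih := DPd_eq_zero z k n (by omega) a
    simp [DPd, ih, hkn]

lemma DBd_eq_zero (z : ℂ) (k : ℕ) : ∀ n, n ≤ k → ∀ a, DBd z k n a = (0, 0)
  | 0, _, a => rfl
  | n + 1, h, a => by
    have hkn : k ≠ n := by omega
    have ih := DBd_eq_zero z k n (by omega) a
    simp [DBd, ih, hkn]

lemma sum_split (n : ℕ) (F G1 G2 G3 G4 : ℕ → ℂ) (c1 c2 c3 c4 : ℂ)
    (h : ∀ k ∈ range n, F k = c1 * G1 k + c2 * G2 k + c3 * G3 k + c4 * G4 k) :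
    ∑ k ∈ range n, F k =
      c1 * ∑ k ∈ range n, G1 k + c2 * ∑ k ∈ range n, G2 k
        + c3 * ∑ k ∈ range n, G3 k + c4 * ∑ k ∈ range n, G4 k := by
  rw [Finset.sum_congr rfl h]
  simp [Finset.sum_add_distrib, Finset.mul_sum]

lemma key (z w : ℂ) (a : ℕ → ℂ) : ∀ n : ℕ,
    ((z - w) * ∑ k ∈ range n, (1 - (Complex.normSq (a k) : ℂ)) *
      ((DBd z k n a).1 * (DPd w k n a).1 - (DPd z k n a).1 * (DBd w k n a).1) = 0) ∧
    ((z - w) * ∑ k ∈ range n, (1 - (Complex.normSq (a k) : ℂ)) *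
      ((DBd z k n a).2 * (DPd w k n a).2 - (DPd z k n a).2 * (DBd w k n a).2) = 0) ∧
    ((z - w) * ∑ k ∈ range n, (1 - (Complex.normSq (a k) : ℂ)) *
      ((DBd z k n a).1 * (DPd w k n a).2 - (DPd z k n a).1 * (DBd w k n a).2) =
      w * ((PhiP n z a).1 * (PhiP n w a).2 - (PhiP n w a).1 * (PhiP n z a).2)) ∧
    ((z - w) * ∑ k ∈ range n, (1 - (Complex.normSq (a k) : ℂ)) *
      ((DBd z k n a).2 * (DPd w k n a).1 - (DPd z k n a).2 * (DBd w k n a).1) =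
      -(z * ((PhiP n z a).1 * (PhiP n w a).2 - (PhiP n w a).1 * (PhiP n z a).2)))
  | 0 => by simp [PhiP]
  | n + 1 => by
    obtain ⟨ih11, ih22, ih12, ih21⟩ := key z w a n
    have hz1 : DPd z n n a = (0, 0) := DPd_eq_zero z n n le_rfl a
    have hz2 : DBd z n n a = (0, 0) := DBd_eq_zero z n n le_rfl a
    have hw1 : DPd w n n a = (0, 0) := DPd_eq_zero w n n le_rfl a
    have hw2 : DBd w n n a = (0, 0) := DBd_eq_zero w n n le_rfl a
    have hnc : ((Complex.normSq (a n) : ℂ)) = a n * (starRingEnd ℂ) (a n) :=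
      (Complex.mul_conj (a n)).symm
    set α := a n with hα
    set b := (starRingEnd ℂ) (a n) with hb
    -- the four level-n summands
    set t11 : ℕ → ℂ := fun k => (1 - (Complex.normSq (a k) : ℂ)) *
      ((DBd z k n a).1 * (DPd w k n a).1 - (DPd z k n a).1 * (DBd w k n a).1) with ht11
    set t22 : ℕ → ℂ := fun k => (1 - (Complex.normSq (a k) : ℂ)) *
      ((DBd z k n a).2 * (DPd w k n a).2 - (DPd z k n a).2 * (DBd w k n a).2) with ht22
    set t12 : ℕ → ℂ := fun k => (1 - (Complex.normSq (a k) : ℂ)) *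
      ((DBd z k n a).1 * (DPd w k n a).2 - (DPd z k n a).1 * (DBd w k n a).2) with ht12
    set t21 : ℕ → ℂ := fun k => (1 - (Complex.normSq (a k) : ℂ)) *
      ((DBd z k n a).2 * (DPd w k n a).1 - (DPd z k n a).2 * (DBd w k n a).1) with ht21
    refine ⟨?_, ?_, ?_, ?_⟩
    · rw [Finset.sum_range_succ,
        sum_split n _ t11 t12 t21 t22 (z * w) (-(z * b)) (-(b * w)) (b * b)
          (by
            intro k hk
            have hkn : k ≠ n := by have := Finset.mem_range.mp hk; omega
            simp only [ht11, ht12, ht21, ht22, DPd, DBd, if_neg hkn, ← hα, ← hb]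
            ring)]
      simp only [DPd, DBd, if_pos rfl, if_true, hz1, hz2, hw1, hw2, ← hα, ← hb]
      linear_combination z * w * ih11 + (-(z * b)) * ih12 + (-(b * w)) * ih21 + b * b * ih22
    · rw [Finset.sum_range_succ,
        sum_split n _ t11 t12 t21 t22 (α * α * z * w) (-(α * z)) (-(α * w)) 1
          (by
            intro k hk
            have hkn : k ≠ n := by have := Finset.mem_range.mp hk; omega
            simp only [ht11, ht12, ht21, ht22, DPd, DBd, if_neg hkn, ← hα, ← hb]
            ring)]
      simp only [DPd, DBd, if_pos rfl, if_true, hz1, hz2, hw1, hw2, ← hα, ← hb]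
      linear_combination (α * α * z * w) * ih11 + (-(α * z)) * ih12 + (-(α * w)) * ih21 + ih22
    · rw [Finset.sum_range_succ,
        sum_split n _ t11 t12 t21 t22 (-(z * α * w)) z (b * α * w) (-b)
          (by
            intro k hk
            have hkn : k ≠ n := by have := Finset.mem_range.mp hk; omega
            simp only [ht11, ht12, ht21, ht22, DPd, DBd, if_neg hkn, ← hα, ← hb]
            ring)]
      simp only [PhiP, DPd, DBd, if_pos rfl, if_true, hz1, hz2, hw1, hw2, hnc, ← hα, ← hb]
      linear_combination (-(z * α * w)) * ih11 + z * ih12 + (b * α * w) * ih21 + (-b) * ih22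
    · rw [Finset.sum_range_succ,
        sum_split n _ t11 t12 t21 t22 (-(α * z * w)) (α * z * b) w (-b)
          (by
            intro k hk
            have hkn : k ≠ n := by have := Finset.mem_range.mp hk; omega
            simp only [ht11, ht12, ht21, ht22, DPd, DBd, if_neg hkn, ← hα, ← hb]
            ring)]
      simp only [PhiP, DPd, DBd, if_pos rfl, if_true, hz1, hz2, hw1, hw2, hnc, ← hα, ← hb]
      linear_combination (-(α * z * w)) * ih11 + (α * z * b) * ih12 + w * ih21 + (-b) * ih22

lemma PhiP_update_of_le (z : ℂ) (k : ℕ) : ∀ n, n ≤ k → ∀ a c,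
    PhiP n z (Function.update a k c) = PhiP n z a
  | 0, _, a, c => rfl
  | n + 1, h, a, c => by
    have hkn : n ≠ k := by omega
    have ih := PhiP_update_of_le z k n (by omega) a c
    simp [PhiP, ih, Function.update_of_ne hkn]

lemma PhiP_update (z : ℂ) (k : ℕ) : ∀ n a (c : ℂ),
    (PhiP n z (Function.update a k c)).1 =
      (PhiP n z a).1 + (c - a k) * (DPd z k n a).1
        + ((starRingEnd ℂ) c - (starRingEnd ℂ) (a k)) * (DBd z k n a).1 ∧
    (PhiP n z (Function.update a k c)).2 =
      (PhiP n z a).2 + (c - a k) * (DPd z k n a).2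
        + ((starRingEnd ℂ) c - (starRingEnd ℂ) (a k)) * (DBd z k n a).2
  | 0, a, c => by simp [PhiP, DPd, DBd]
  | n + 1, a, c => by
    by_cases hk : k = n
    · subst hk
      have h0 : PhiP k z (Function.update a k c) = PhiP k z a :=
        PhiP_update_of_le z k k le_rfl a c
      have h1 : DPd z k k a = (0, 0) := DPd_eq_zero z k k le_rfl a
      have h2 : DBd z k k a = (0, 0) := DBd_eq_zero z k k le_rfl a
      constructor <;>
      · simp [PhiP, DPd, DBd, h0, h1, h2, Function.update_self]
        ring
    · obtain ⟨ih1, ih2⟩ := PhiP_update z k n a c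
      have hn : (Function.update a k c) n = a n := Function.update_of_ne (by omega) _ _
      constructor <;>
      · simp only [PhiP, DPd, DBd, if_neg hk, hn, ih1, ih2]
        ring


-- derivative identification lemmas
lemma dAlpha_Phi (n k : ℕ) (z : ℂ) (a : ℕ → ℂ) :
    dAlpha k (Phi n z) a = (DPd z k n a).1 ∧ dAlphaBar k (Phi n z) a = (DBd z k n a).1 := by
  refine wirtinger_affine k a (Phi n z)
    ((PhiP n z a).1 - a k * (DPd z k n a).1 - (starRingEnd ℂ) (a k) * (DBd z k n a).1)
    (DPd z k n a).1 (DBd z k n a).1 (fun c => ?_)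
  have h := (PhiP_update z k n a c).1
  unfold Phi
  rw [h]; ring

lemma dAlpha_PhiStar (n k : ℕ) (z : ℂ) (a : ℕ → ℂ) :
    dAlpha k (PhiStar n z) a = (DPd z k n a).2 ∧ dAlphaBar k (PhiStar n z) a = (DBd z k n a).2 := by
  refine wirtinger_affine k a (PhiStar n z)
    ((PhiP n z a).2 - a k * (DPd z k n a).2 - (starRingEnd ℂ) (a k) * (DBd z k n a).2)
    (DPd z k n a).2 (DBd z k n a).2 (fun c => ?_)
  have h := (PhiP_update z k n a c).2
  unfold PhiStar
  rw [h]; ring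

theorem poisson_Phi_PhiStar (n : ℕ) (z w : ℂ) (hzw : z ≠ w) (a : ℕ → ℂ) (ha : ∀ k, ‖a k‖ < 1) :
    pb (Phi n z) (PhiStar n w) a =
      Complex.I * w / (z - w) * (Phi n z a * PhiStar n w a - Phi n w a * PhiStar n z a) := by
  have hsum : (∑' k : ℕ, (1 - (Complex.normSq (a k) : ℂ)) *
      (dAlphaBar k (Phi n z) a * dAlpha k (PhiStar n w) a -
        dAlpha k (Phi n z) a * dAlphaBar k (PhiStar n w) a)) =
      ∑ k ∈ Finset.range n, (1 - (Complex.normSq (a k) : ℂ)) *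
        ((DBd z k n a).1 * (DPd w k n a).2 - (DPd z k n a).1 * (DBd w k n a).2) := by
    have hpt : ∀ k : ℕ, (1 - (Complex.normSq (a k) : ℂ)) *
        (dAlphaBar k (Phi n z) a * dAlpha k (PhiStar n w) a -
          dAlpha k (Phi n z) a * dAlphaBar k (PhiStar n w) a) =
        (1 - (Complex.normSq (a k) : ℂ)) *
        ((DBd z k n a).1 * (DPd w k n a).2 - (DPd z k n a).1 * (DBd w k n a).2) := by
      intro k
      rw [(dAlpha_Phi n k z a).1, (dAlpha_Phi n k z a).2,
        (dAlpha_PhiStar n k w a).1, (dAlpha_PhiStar n k w a).2]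
    rw [tsum_congr hpt]
    refine tsum_eq_sum ?_
    intro k hk
    have hnk : n ≤ k := by
      by_contra h
      exact hk (Finset.mem_range.mpr (by omega))
    rw [DPd_eq_zero z k n hnk a, DPd_eq_zero w k n hnk a,
      DBd_eq_zero z k n hnk a, DBd_eq_zero w k n hnk a]
    simp
  have hkey := (key z w a n).2.2.1
  have hzw' : z - w ≠ 0 := sub_ne_zero.mpr hzw
  unfold pb
  rw [hsum]
  unfold Phi PhiStar
  field_simp
  linear_combination hkey

end Aux
end

section
/- For every n ≥ 0 and all z, w ∈ ℂ with z ≠ w, the Poisson bracket {Ψ_n(z), Ψ_n^*(w)} = (i·w/(z−w))·(Ψ_n(z)·Ψ_n^*(w) − Ψ_n(w)·Ψ_n^*(z)). -/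
open Complex

/-! ### Auxiliary machinery -/

/-- The pair (Ψ_n(z), Ψ_n^*(z)). -/
noncomputable def PsiP (n : ℕ) (z : ℂ) (a : ℕ → ℂ) : ℂ × ℂ := PhiP n z (fun k => - a k)

lemma PsiP_succ (n : ℕ) (z : ℂ) (a : ℕ → ℂ) :
    PsiP (n + 1) z a =
      (z * (PsiP n z a).1 + (starRingEnd ℂ) (a n) * (PsiP n z a).2,
       (PsiP n z a).2 + a n * z * (PsiP n z a).1) := by
  unfold PsiP
  rw [PhiP]
  simp only [map_neg, neg_mul, neg_neg, sub_neg_eq_add]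

lemma PsiP_congr (z : ℂ) : ∀ (n : ℕ) (a b : ℕ → ℂ), (∀ j, j < n → a j = b j) →
    PsiP n z a = PsiP n z b := by
  intro n
  induction n with
  | zero => intro a b _; rfl
  | succ n ih =>
      intro a b h
      rw [PsiP_succ, PsiP_succ, ih a b (fun j hj => h j (Nat.lt_succ_of_lt hj)),
        h n n.lt_succ_self]

/-- `(B, C)`: the coefficients of `t` and `conj t` in `PsiP n z (update a k t)`. -/
noncomputable def DP (k : ℕ) (z : ℂ) : ℕ → (ℕ → ℂ) → (ℂ × ℂ) × (ℂ × ℂ)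
  | 0, _ => ((0, 0), (0, 0))
  | n + 1, a =>
      if n = k then
        ((0, z * (PsiP n z a).1), ((PsiP n z a).2, 0))
      else
        ((z * (DP k z n a).1.1 + (starRingEnd ℂ) (a n) * (DP k z n a).1.2,
          (DP k z n a).1.2 + a n * z * (DP k z n a).1.1),
         (z * (DP k z n a).2.1 + (starRingEnd ℂ) (a n) * (DP k z n a).2.2,
          (DP k z n a).2.2 + a n * z * (DP k z n a).2.1))

lemma DP_succ (k : ℕ) (z : ℂ) (n : ℕ) (a : ℕ → ℂ) :
    DP k z (n + 1) a =
      if n = k then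
        ((0, z * (PsiP n z a).1), ((PsiP n z a).2, 0))
      else
        ((z * (DP k z n a).1.1 + (starRingEnd ℂ) (a n) * (DP k z n a).1.2,
          (DP k z n a).1.2 + a n * z * (DP k z n a).1.1),
         (z * (DP k z n a).2.1 + (starRingEnd ℂ) (a n) * (DP k z n a).2.2,
          (DP k z n a).2.2 + a n * z * (DP k z n a).2.1)) := by
  rw [DP]

lemma DP_of_le (k : ℕ) (z : ℂ) (a : ℕ → ℂ) : ∀ n, n ≤ k → DP k z n a = ((0, 0), (0, 0)) := by
  intro n
  induction n with
  | zero => intro _; rfl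
  | succ n ih =>
      intro h
      have hnk : n ≠ k := by omega
      rw [DP_succ, if_neg hnk, ih (by omega)]
      simp

lemma psiP_affine (k : ℕ) (z : ℂ) (a : ℕ → ℂ) : ∀ (n : ℕ) (t : ℂ),
    PsiP n z (Function.update a k t) =
      ((PsiP n z a).1 + (t - a k) * (DP k z n a).1.1 +
        ((starRingEnd ℂ) t - (starRingEnd ℂ) (a k)) * (DP k z n a).2.1,
       (PsiP n z a).2 + (t - a k) * (DP k z n a).1.2 +
        ((starRingEnd ℂ) t - (starRingEnd ℂ) (a k)) * (DP k z n a).2.2) := by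
  intro n
  induction n with
  | zero =>
      intro t
      show (1, 1) = _
      simp [DP, PsiP, PhiP]
  | succ n ih =>
      intro t
      by_cases h : n = k
      · subst h
        have hupd : PsiP n z (Function.update a n t) = PsiP n z a :=
          PsiP_congr z n _ _ (fun j hj => Function.update_of_ne (Nat.ne_of_lt hj) t a)
        rw [PsiP_succ, hupd, Function.update_self, PsiP_succ, DP_succ, if_pos rfl]
        dsimp only
        refine Prod.ext ?_ ?_ <;> dsimp only <;> ring
      · rw [PsiP_succ, ih t, Function.update_of_ne h, PsiP_succ, DP_succ, if_neg h]
        refine Prod.ext ?_ ?_ <;> dsimp only <;> ring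

lemma deriv_const_add_lin (c e : ℂ) : deriv (fun t : ℝ => c + (t : ℂ) * e) 0 = e := by
  have h1 : HasDerivAt (fun t : ℝ => (t : ℂ)) 1 0 := by
    simpa using (hasDerivAt_id (0 : ℝ)).ofReal_comp
  simpa using ((h1.mul_const e).const_add c).deriv

lemma dAlpha_of_affine (k : ℕ) (f : (ℕ → ℂ) → ℂ) (a : ℕ → ℂ) (B C : ℂ)
    (h : ∀ t : ℂ, f (Function.update a k t) =
      f a + (t - a k) * B + ((starRingEnd ℂ) t - (starRingEnd ℂ) (a k)) * C) :
    dAlpha k f a = B ∧ dAlphaBar k f a = C := by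
  have hu : duDeriv k f a = B + C := by
    unfold duDeriv
    have he : (fun t : ℝ => f (Function.update a k (a k + (t : ℂ)))) =
        fun t : ℝ => f a + (t : ℂ) * (B + C) := by
      funext t
      rw [h]
      simp only [map_add, Complex.conj_ofReal]
      ring
    rw [he, deriv_const_add_lin]
  have hv : dvDeriv k f a = Complex.I * (B - C) := by
    unfold dvDeriv
    have he : (fun t : ℝ => f (Function.update a k (a k + (t : ℂ) * Complex.I))) =
        fun t : ℝ => f a + (t : ℂ) * (Complex.I * (B - C)) := by
      funext t
      rw [h]
      simp only [map_add, map_mul, Complex.conj_ofReal, Complex.conj_I]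
      ring
    rw [he, deriv_const_add_lin]
  constructor
  · unfold dAlpha
    rw [hu, hv]
    linear_combination (-(B - C) / 2) * Complex.I_mul_I
  · unfold dAlphaBar
    rw [hu, hv]
    linear_combination ((B - C) / 2) * Complex.I_mul_I

lemma dAlpha_Psi (k n : ℕ) (z : ℂ) (a : ℕ → ℂ) :
    dAlpha k (Psi n z) a = (DP k z n a).1.1 ∧ dAlphaBar k (Psi n z) a = (DP k z n a).2.1 :=
  dAlpha_of_affine k (Psi n z) a _ _ (fun t => congrArg Prod.fst (psiP_affine k z a n t))

lemma dAlpha_PsiStar (k n : ℕ) (z : ℂ) (a : ℕ → ℂ) :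
    dAlpha k (PsiStar n z) a = (DP k z n a).1.2 ∧
      dAlphaBar k (PsiStar n z) a = (DP k z n a).2.2 :=
  dAlpha_of_affine k (PsiStar n z) a _ _ (fun t => congrArg Prod.snd (psiP_affine k z a n t))

/-! ### The four bracket sums -/

noncomputable def S00 (z w : ℂ) (a : ℕ → ℂ) (n : ℕ) : ℂ :=
  ∑ k ∈ Finset.range n, (1 - (Complex.normSq (a k) : ℂ)) *
    ((DP k z n a).2.1 * (DP k w n a).1.1 - (DP k z n a).1.1 * (DP k w n a).2.1)

noncomputable def S01 (z w : ℂ) (a : ℕ → ℂ) (n : ℕ) : ℂ :=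
  ∑ k ∈ Finset.range n, (1 - (Complex.normSq (a k) : ℂ)) *
    ((DP k z n a).2.1 * (DP k w n a).1.2 - (DP k z n a).1.1 * (DP k w n a).2.2)

noncomputable def S10 (z w : ℂ) (a : ℕ → ℂ) (n : ℕ) : ℂ :=
  ∑ k ∈ Finset.range n, (1 - (Complex.normSq (a k) : ℂ)) *
    ((DP k z n a).2.2 * (DP k w n a).1.1 - (DP k z n a).1.2 * (DP k w n a).2.1)

noncomputable def S11 (z w : ℂ) (a : ℕ → ℂ) (n : ℕ) : ℂ :=
  ∑ k ∈ Finset.range n, (1 - (Complex.normSq (a k) : ℂ)) *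
    ((DP k z n a).2.2 * (DP k w n a).1.2 - (DP k z n a).1.2 * (DP k w n a).2.2)

lemma S00_succ (z w : ℂ) (a : ℕ → ℂ) (n : ℕ) :
    S00 z w a (n + 1) = (z * w) * S00 z w a n + (z * (starRingEnd ℂ) (a n)) * S01 z w a n +
      ((starRingEnd ℂ) (a n) * w) * S10 z w a n +
      ((starRingEnd ℂ) (a n) * (starRingEnd ℂ) (a n)) * S11 z w a n := by
  unfold S00 S01 S10 S11
  rw [Finset.sum_range_succ]
  have hnew : (1 - (Complex.normSq (a n) : ℂ)) *
      ((DP n z (n + 1) a).2.1 * (DP n w (n + 1) a).1.1 -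
        (DP n z (n + 1) a).1.1 * (DP n w (n + 1) a).2.1) = 0 := by
    rw [DP_succ, DP_succ, if_pos rfl, if_pos rfl]
    dsimp only
    ring
  rw [hnew, add_zero, Finset.mul_sum, Finset.mul_sum, Finset.mul_sum, Finset.mul_sum,
    ← Finset.sum_add_distrib, ← Finset.sum_add_distrib, ← Finset.sum_add_distrib]
  refine Finset.sum_congr rfl fun k hk => ?_
  have hnk : n ≠ k := (Finset.mem_range.mp hk).ne'
  rw [DP_succ, DP_succ, if_neg hnk, if_neg hnk]
  dsimp only
  ring

lemma S11_succ (z w : ℂ) (a : ℕ → ℂ) (n : ℕ) :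
    S11 z w a (n + 1) = S11 z w a n + (a n * w) * S10 z w a n + (a n * z) * S01 z w a n +
      (a n * a n * z * w) * S00 z w a n := by
  unfold S00 S01 S10 S11
  rw [Finset.sum_range_succ]
  have hnew : (1 - (Complex.normSq (a n) : ℂ)) *
      ((DP n z (n + 1) a).2.2 * (DP n w (n + 1) a).1.2 -
        (DP n z (n + 1) a).1.2 * (DP n w (n + 1) a).2.2) = 0 := by
    rw [DP_succ, DP_succ, if_pos rfl, if_pos rfl]
    dsimp only
    ring
  rw [hnew, add_zero, Finset.mul_sum, Finset.mul_sum, Finset.mul_sum,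
    ← Finset.sum_add_distrib, ← Finset.sum_add_distrib, ← Finset.sum_add_distrib]
  · refine Finset.sum_congr rfl fun k hk => ?_
    have hnk : n ≠ k := (Finset.mem_range.mp hk).ne'
    rw [DP_succ, DP_succ, if_neg hnk, if_neg hnk]
    dsimp only
    ring

lemma S01_succ (z w : ℂ) (a : ℕ → ℂ) (n : ℕ) :
    S01 z w a (n + 1) = z * S01 z w a n + (z * a n * w) * S00 z w a n +
      (starRingEnd ℂ) (a n) * S11 z w a n +
      ((starRingEnd ℂ) (a n) * a n * w) * S10 z w a n +
      (1 - (starRingEnd ℂ) (a n) * a n) * (w * (PsiP n z a).2 * (PsiP n w a).1) := by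
  unfold S00 S01 S10 S11
  rw [Finset.sum_range_succ]
  have hnew : (1 - (Complex.normSq (a n) : ℂ)) *
      ((DP n z (n + 1) a).2.1 * (DP n w (n + 1) a).1.2 -
        (DP n z (n + 1) a).1.1 * (DP n w (n + 1) a).2.2) =
      (1 - (starRingEnd ℂ) (a n) * a n) * (w * (PsiP n z a).2 * (PsiP n w a).1) := by
    rw [DP_succ, DP_succ, if_pos rfl, if_pos rfl, Complex.normSq_eq_conj_mul_self]
    dsimp only
    ring
  rw [hnew]
  congr 1
  rw [Finset.mul_sum, Finset.mul_sum, Finset.mul_sum, Finset.mul_sum,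
    ← Finset.sum_add_distrib, ← Finset.sum_add_distrib, ← Finset.sum_add_distrib]
  refine Finset.sum_congr rfl fun k hk => ?_
  have hnk : n ≠ k := (Finset.mem_range.mp hk).ne'
  rw [DP_succ, DP_succ, if_neg hnk, if_neg hnk]
  dsimp only
  ring

lemma S10_succ (z w : ℂ) (a : ℕ → ℂ) (n : ℕ) :
    S10 z w a (n + 1) = w * S10 z w a n + (starRingEnd ℂ) (a n) * S11 z w a n +
      (a n * z * w) * S00 z w a n + (a n * (starRingEnd ℂ) (a n) * z) * S01 z w a n +
      (1 - (starRingEnd ℂ) (a n) * a n) * (-(z * (PsiP n z a).1 * (PsiP n w a).2)) := by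
  unfold S00 S01 S10 S11
  rw [Finset.sum_range_succ]
  have hnew : (1 - (Complex.normSq (a n) : ℂ)) *
      ((DP n z (n + 1) a).2.2 * (DP n w (n + 1) a).1.1 -
        (DP n z (n + 1) a).1.2 * (DP n w (n + 1) a).2.1) =
      (1 - (starRingEnd ℂ) (a n) * a n) * (-(z * (PsiP n z a).1 * (PsiP n w a).2)) := by
    rw [DP_succ, DP_succ, if_pos rfl, if_pos rfl, Complex.normSq_eq_conj_mul_self]
    dsimp only
    ring
  rw [hnew]
  congr 1
  rw [Finset.mul_sum, Finset.mul_sum, Finset.mul_sum, Finset.mul_sum,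
    ← Finset.sum_add_distrib, ← Finset.sum_add_distrib, ← Finset.sum_add_distrib]
  refine Finset.sum_congr rfl fun k hk => ?_
  have hnk : n ≠ k := (Finset.mem_range.mp hk).ne'
  rw [DP_succ, DP_succ, if_neg hnk, if_neg hnk]
  dsimp only
  ring

lemma key_s2 (z w : ℂ) (a : ℕ → ℂ) : ∀ n : ℕ,
    (z - w) * S00 z w a n = 0 ∧ (z - w) * S11 z w a n = 0 ∧
    (z - w) * S01 z w a n =
      w * ((PsiP n z a).1 * (PsiP n w a).2 - (PsiP n w a).1 * (PsiP n z a).2) ∧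
    (z - w) * S10 z w a n =
      -(z * ((PsiP n z a).1 * (PsiP n w a).2 - (PsiP n w a).1 * (PsiP n z a).2)) := by
  intro n
  induction n with
  | zero =>
      refine ⟨?_, ?_, ?_, ?_⟩ <;> simp [S00, S01, S10, S11, PsiP, PhiP]
  | succ n ih =>
      obtain ⟨h00, h11, h01, h10⟩ := ih
      have hΔ : (PsiP (n + 1) z a).1 * (PsiP (n + 1) w a).2 -
          (PsiP (n + 1) w a).1 * (PsiP (n + 1) z a).2 =
          (1 - (starRingEnd ℂ) (a n) * a n) *
            (z * (PsiP n z a).1 * (PsiP n w a).2 - w * (PsiP n w a).1 * (PsiP n z a).2) := by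
        rw [PsiP_succ n z a, PsiP_succ n w a]
        dsimp only
        ring
      refine ⟨?_, ?_, ?_, ?_⟩
      · rw [S00_succ]
        linear_combination (z * w) * h00 + (z * (starRingEnd ℂ) (a n)) * h01 +
          ((starRingEnd ℂ) (a n) * w) * h10 +
          ((starRingEnd ℂ) (a n) * (starRingEnd ℂ) (a n)) * h11
      · rw [S11_succ]
        linear_combination h11 + (a n * w) * h10 + (a n * z) * h01 + (a n * a n * z * w) * h00
      · rw [S01_succ, hΔ]
        linear_combination z * h01 + (z * a n * w) * h00 + (starRingEnd ℂ) (a n) * h11 +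
          ((starRingEnd ℂ) (a n) * a n * w) * h10
      · rw [S10_succ, hΔ]
        linear_combination w * h10 + (starRingEnd ℂ) (a n) * h11 + (a n * z * w) * h00 +
          (a n * (starRingEnd ℂ) (a n) * z) * h01

theorem poisson_Psi_PsiStar (n : ℕ) (z w : ℂ) (hzw : z ≠ w) (a : ℕ → ℂ) (ha : ∀ k, ‖a k‖ < 1) :
    pb (Psi n z) (PsiStar n w) a =
      Complex.I * w / (z - w) * (Psi n z a * PsiStar n w a - Psi n w a * PsiStar n z a) := by
  have hne : z - w ≠ 0 := sub_ne_zero.mpr hzw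
  obtain ⟨_, _, h01, _⟩ := key_s2 z w a n
  unfold pb
  rw [tsum_eq_sum (s := Finset.range n) (f := fun k => (1 - (Complex.normSq (a k) : ℂ)) *
      (dAlphaBar k (Psi n z) a * dAlpha k (PsiStar n w) a -
        dAlpha k (Psi n z) a * dAlphaBar k (PsiStar n w) a)) ?_]
  · have hS : ∑ k ∈ Finset.range n, (1 - (Complex.normSq (a k) : ℂ)) *
        (dAlphaBar k (Psi n z) a * dAlpha k (PsiStar n w) a -
          dAlpha k (Psi n z) a * dAlphaBar k (PsiStar n w) a) = S01 z w a n := by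
      refine Finset.sum_congr rfl fun k _ => ?_
      simp only [(dAlpha_Psi k n z a).1, (dAlpha_Psi k n z a).2,
        (dAlpha_PsiStar k n w a).1, (dAlpha_PsiStar k n w a).2]
    rw [hS, show Psi n z a = (PsiP n z a).1 from rfl, show Psi n w a = (PsiP n w a).1 from rfl,
      show PsiStar n w a = (PsiP n w a).2 from rfl, show PsiStar n z a = (PsiP n z a).2 from rfl,
      div_mul_eq_mul_div, eq_div_iff hne]
    linear_combination Complex.I * h01
  · intro k hk
    have hk' : n ≤ k := le_of_not_gt (fun h => hk (Finset.mem_range.mpr h))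
    rw [(dAlpha_Psi k n z a).1, (dAlpha_Psi k n z a).2,
      (dAlpha_PsiStar k n w a).1, (dAlpha_PsiStar k n w a).2,
      DP_of_le k z a n hk', DP_of_le k w a n hk']
    simp
end

section
/- For every n ≥ 0 and all z, w ∈ ℂ with z ≠ w, the Poisson bracket {Φ_n^*(z), Ψ_n^*(w)} = −(i·w/(z−w))·(Φ_n^*(z)·Ψ_n^*(w) − Φ_n^*(w)·Ψ_n^*(z)) + (i/2)·(Φ_n^*(z) + Ψ_n^*(z))·(Φ_n^*(w) − Ψ_n^*(w)). -/
open Complex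

lemma updU0 (a : ℕ → ℂ) (k : ℕ) : Function.update a k (a k + ((0:ℝ):ℂ)) = a := by simp
lemma updV0 (a : ℕ → ℂ) (k : ℕ) : Function.update a k (a k + ((0:ℝ):ℂ) * Complex.I) = a := by simp
lemma hasDerivAt_ofReal' (x : ℝ) : HasDerivAt (fun t : ℝ => (t : ℂ)) 1 x := by
  simpa using (hasDerivAt_id x).ofReal_comp
lemma coordU (a : ℕ → ℂ) (k n : ℕ) :
    HasDerivAt (fun t : ℝ => Function.update a k (a k + (t : ℂ)) n)
      (if k = n then 1 else 0) 0 := by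
  by_cases h : k = n
  · subst h; simp only [Function.update_self, if_pos rfl]
    simpa using (hasDerivAt_ofReal' 0).const_add (a k)
  · simp only [Function.update_of_ne (Ne.symm h), if_neg h]; exact hasDerivAt_const 0 _
lemma coordV (a : ℕ → ℂ) (k n : ℕ) :
    HasDerivAt (fun t : ℝ => Function.update a k (a k + (t : ℂ) * Complex.I) n)
      (if k = n then Complex.I else 0) 0 := by
  by_cases h : k = n
  · subst h; simp only [Function.update_self, if_pos rfl]
    simpa using ((hasDerivAt_ofReal' 0).mul_const Complex.I).const_add (a k)
  · simp only [Function.update_of_ne (Ne.symm h), if_neg h]; exact hasDerivAt_const 0 _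
lemma coordUconj (a : ℕ → ℂ) (k n : ℕ) :
    HasDerivAt (fun t : ℝ => (starRingEnd ℂ) (Function.update a k (a k + (t : ℂ)) n))
      (if k = n then 1 else 0) 0 := by
  by_cases h : k = n
  · subst h
    have e : (fun t : ℝ => (starRingEnd ℂ) (Function.update a k (a k + (t : ℂ)) k))
        = fun t : ℝ => (starRingEnd ℂ) (a k) + (t : ℂ) := by
      funext t; simp [Function.update_self, map_add, Complex.conj_ofReal]
    rw [e, if_pos rfl]; simpa using (hasDerivAt_ofReal' 0).const_add ((starRingEnd ℂ) (a k))
  · simp only [Function.update_of_ne (Ne.symm h), if_neg h]; exact hasDerivAt_const 0 _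
lemma coordVconj (a : ℕ → ℂ) (k n : ℕ) :
    HasDerivAt (fun t : ℝ => (starRingEnd ℂ) (Function.update a k (a k + (t : ℂ) * Complex.I) n))
      (if k = n then -Complex.I else 0) 0 := by
  by_cases h : k = n
  · subst h
    have e : (fun t : ℝ => (starRingEnd ℂ) (Function.update a k (a k + (t : ℂ) * Complex.I) k))
        = fun t : ℝ => (starRingEnd ℂ) (a k) + (t : ℂ) * (-Complex.I) := by
      funext t; simp [Function.update_self, map_add, map_mul, Complex.conj_ofReal, Complex.conj_I]
    rw [e, if_pos rfl]; simpa using ((hasDerivAt_ofReal' 0).mul_const (-Complex.I)).const_add ((starRingEnd ℂ) (a k))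
  · simp only [Function.update_of_ne (Ne.symm h), if_neg h]; exact hasDerivAt_const 0 _

lemma hasDerivAt_of_eq {F G : ℝ → ℂ} {d : ℂ} (hFG : F = G) (hG : HasDerivAt G d 0) :
    HasDerivAt F (deriv F 0) 0 := by subst hFG; exact hG.deriv ▸ hG
lemma deriv_eq_of_eq {F G : ℝ → ℂ} {d : ℂ} (hFG : F = G) (hG : HasDerivAt G d 0) :
    deriv F 0 = d := by rw [hFG]; exact hG.deriv

lemma masterPhi : ∀ (n : ℕ) (z : ℂ) (k : ℕ) (a : ℕ → ℂ),
    HasDerivAt (fun t : ℝ => Phi n z (Function.update a k (a k + (t:ℂ)))) (duDeriv k (Phi n z) a) 0 ∧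
    HasDerivAt (fun t : ℝ => Phi n z (Function.update a k (a k + (t:ℂ) * Complex.I))) (dvDeriv k (Phi n z) a) 0 ∧
    HasDerivAt (fun t : ℝ => PhiStar n z (Function.update a k (a k + (t:ℂ)))) (duDeriv k (PhiStar n z) a) 0 ∧
    HasDerivAt (fun t : ℝ => PhiStar n z (Function.update a k (a k + (t:ℂ) * Complex.I))) (dvDeriv k (PhiStar n z) a) 0
  | 0, z, k, a => by
    refine ⟨?_, ?_, ?_, ?_⟩ <;>
      exact hasDerivAt_of_eq (G := fun _ : ℝ => (1:ℂ))
        (by funext t; simp [Phi, PhiStar, PhiP]) (hasDerivAt_const 0 1)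
  | n+1, z, k, a => by
    obtain ⟨h1, h2, h3, h4⟩ := masterPhi n z k a
    refine ⟨?_, ?_, ?_, ?_⟩
    · exact hasDerivAt_of_eq (by funext t; simp [Phi, PhiStar, PhiP])
        ((h1.const_mul z).sub ((coordUconj a k n).mul h3))
    · exact hasDerivAt_of_eq (by funext t; simp [Phi, PhiStar, PhiP])
        ((h2.const_mul z).sub ((coordVconj a k n).mul h4))
    · exact hasDerivAt_of_eq (by funext t; simp [Phi, PhiStar, PhiP])
        (h3.sub (((coordU a k n).mul_const z).mul h1))
    · exact hasDerivAt_of_eq (by funext t; simp [Phi, PhiStar, PhiP])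
        (h4.sub (((coordV a k n).mul_const z).mul h2))

lemma masterPsi : ∀ (n : ℕ) (z : ℂ) (k : ℕ) (a : ℕ → ℂ),
    HasDerivAt (fun t : ℝ => Psi n z (Function.update a k (a k + (t:ℂ)))) (duDeriv k (Psi n z) a) 0 ∧
    HasDerivAt (fun t : ℝ => Psi n z (Function.update a k (a k + (t:ℂ) * Complex.I))) (dvDeriv k (Psi n z) a) 0 ∧
    HasDerivAt (fun t : ℝ => PsiStar n z (Function.update a k (a k + (t:ℂ)))) (duDeriv k (PsiStar n z) a) 0 ∧
    HasDerivAt (fun t : ℝ => PsiStar n z (Function.update a k (a k + (t:ℂ) * Complex.I))) (dvDeriv k (PsiStar n z) a) 0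
  | 0, z, k, a => by
    refine ⟨?_, ?_, ?_, ?_⟩ <;>
      exact hasDerivAt_of_eq (G := fun _ : ℝ => (1:ℂ))
        (by funext t; simp [Psi, PsiStar, Phi, PhiStar, PhiP]) (hasDerivAt_const 0 1)
  | n+1, z, k, a => by
    obtain ⟨h1, h2, h3, h4⟩ := masterPsi n z k a
    refine ⟨?_, ?_, ?_, ?_⟩
    · exact hasDerivAt_of_eq (by funext t; simp [Psi, PsiStar, Phi, PhiStar, PhiP])
        ((h1.const_mul z).add ((coordUconj a k n).mul h3))
    · exact hasDerivAt_of_eq (by funext t; simp [Psi, PsiStar, Phi, PhiStar, PhiP])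
        ((h2.const_mul z).add ((coordVconj a k n).mul h4))
    · exact hasDerivAt_of_eq (by funext t; simp [Psi, PsiStar, Phi, PhiStar, PhiP])
        (h3.add (((coordU a k n).mul_const z).mul h1))
    · exact hasDerivAt_of_eq (by funext t; simp [Psi, PsiStar, Phi, PhiStar, PhiP])
        (h4.add (((coordV a k n).mul_const z).mul h2))

lemma duDeriv_Phi_succ (n : ℕ) (z : ℂ) (k : ℕ) (a : ℕ → ℂ) :
    duDeriv k (Phi (n+1) z) a = z * duDeriv k (Phi n z) a -
      ((if k = n then 1 else 0) * PhiStar n z a + (starRingEnd ℂ) (a n) * duDeriv k (PhiStar n z) a) := by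
  obtain ⟨h1, _, h3, _⟩ := masterPhi n z k a
  have hG := (h1.const_mul z).sub ((coordUconj a k n).mul h3)
  simp only [updU0] at hG
  exact deriv_eq_of_eq (by funext t; simp [Phi, PhiStar, PhiP]) hG

lemma dvDeriv_Phi_succ (n : ℕ) (z : ℂ) (k : ℕ) (a : ℕ → ℂ) :
    dvDeriv k (Phi (n+1) z) a = z * dvDeriv k (Phi n z) a -
      ((if k = n then -Complex.I else 0) * PhiStar n z a + (starRingEnd ℂ) (a n) * dvDeriv k (PhiStar n z) a) := by
  obtain ⟨_, h2, _, h4⟩ := masterPhi n z k a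
  have hG := (h2.const_mul z).sub ((coordVconj a k n).mul h4)
  simp only [updV0] at hG
  exact deriv_eq_of_eq (by funext t; simp [Phi, PhiStar, PhiP]) hG

lemma duDeriv_PhiStar_succ (n : ℕ) (z : ℂ) (k : ℕ) (a : ℕ → ℂ) :
    duDeriv k (PhiStar (n+1) z) a = duDeriv k (PhiStar n z) a -
      ((if k = n then 1 else 0) * z * Phi n z a + a n * z * duDeriv k (Phi n z) a) := by
  obtain ⟨h1, _, h3, _⟩ := masterPhi n z k a
  have hG := h3.sub (((coordU a k n).mul_const z).mul h1)
  simp only [updU0] at hG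
  exact deriv_eq_of_eq (by funext t; simp [Phi, PhiStar, PhiP]) hG

lemma dvDeriv_PhiStar_succ (n : ℕ) (z : ℂ) (k : ℕ) (a : ℕ → ℂ) :
    dvDeriv k (PhiStar (n+1) z) a = dvDeriv k (PhiStar n z) a -
      ((if k = n then Complex.I else 0) * z * Phi n z a + a n * z * dvDeriv k (Phi n z) a) := by
  obtain ⟨_, h2, _, h4⟩ := masterPhi n z k a
  have hG := h4.sub (((coordV a k n).mul_const z).mul h2)
  simp only [updV0] at hG
  exact deriv_eq_of_eq (by funext t; simp [Phi, PhiStar, PhiP]) hG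

lemma duDeriv_Psi_succ (n : ℕ) (z : ℂ) (k : ℕ) (a : ℕ → ℂ) :
    duDeriv k (Psi (n+1) z) a = z * duDeriv k (Psi n z) a +
      ((if k = n then 1 else 0) * PsiStar n z a + (starRingEnd ℂ) (a n) * duDeriv k (PsiStar n z) a) := by
  obtain ⟨h1, _, h3, _⟩ := masterPsi n z k a
  have hG := (h1.const_mul z).add ((coordUconj a k n).mul h3)
  simp only [updU0] at hG
  exact deriv_eq_of_eq (by funext t; simp [Psi, PsiStar, Phi, PhiStar, PhiP]) hG

lemma dvDeriv_Psi_succ (n : ℕ) (z : ℂ) (k : ℕ) (a : ℕ → ℂ) :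
    dvDeriv k (Psi (n+1) z) a = z * dvDeriv k (Psi n z) a +
      ((if k = n then -Complex.I else 0) * PsiStar n z a + (starRingEnd ℂ) (a n) * dvDeriv k (PsiStar n z) a) := by
  obtain ⟨_, h2, _, h4⟩ := masterPsi n z k a
  have hG := (h2.const_mul z).add ((coordVconj a k n).mul h4)
  simp only [updV0] at hG
  exact deriv_eq_of_eq (by funext t; simp [Psi, PsiStar, Phi, PhiStar, PhiP]) hG

lemma duDeriv_PsiStar_succ (n : ℕ) (z : ℂ) (k : ℕ) (a : ℕ → ℂ) :
    duDeriv k (PsiStar (n+1) z) a = duDeriv k (PsiStar n z) a +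
      ((if k = n then 1 else 0) * z * Psi n z a + a n * z * duDeriv k (Psi n z) a) := by
  obtain ⟨h1, _, h3, _⟩ := masterPsi n z k a
  have hG := h3.add (((coordU a k n).mul_const z).mul h1)
  simp only [updU0] at hG
  exact deriv_eq_of_eq (by funext t; simp [Psi, PsiStar, Phi, PhiStar, PhiP]) hG

lemma dvDeriv_PsiStar_succ (n : ℕ) (z : ℂ) (k : ℕ) (a : ℕ → ℂ) :
    dvDeriv k (PsiStar (n+1) z) a = dvDeriv k (PsiStar n z) a +
      ((if k = n then Complex.I else 0) * z * Psi n z a + a n * z * dvDeriv k (Psi n z) a) := by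
  obtain ⟨_, h2, _, h4⟩ := masterPsi n z k a
  have hG := h4.add (((coordV a k n).mul_const z).mul h2)
  simp only [updV0] at hG
  exact deriv_eq_of_eq (by funext t; simp [Psi, PsiStar, Phi, PhiStar, PhiP]) hG


lemma dAlpha_Phi_succ (n : ℕ) (z : ℂ) (k : ℕ) (a : ℕ → ℂ) :
    dAlpha k (Phi (n+1) z) a =
      z * dAlpha k (Phi n z) a - (starRingEnd ℂ) (a n) * dAlpha k (PhiStar n z) a := by
  simp only [dAlpha, duDeriv_Phi_succ, dvDeriv_Phi_succ]
  split_ifs with h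
  · first
    | linear_combination (PhiStar n z a / 2) * Complex.I_mul_I
    | linear_combination (-(PhiStar n z a) / 2) * Complex.I_mul_I
  · ring

lemma dAlphaBar_Phi_succ (n : ℕ) (z : ℂ) (k : ℕ) (a : ℕ → ℂ) :
    dAlphaBar k (Phi (n+1) z) a =
      z * dAlphaBar k (Phi n z) a - (starRingEnd ℂ) (a n) * dAlphaBar k (PhiStar n z) a
        - (if k = n then PhiStar n z a else 0) := by
  simp only [dAlphaBar, duDeriv_Phi_succ, dvDeriv_Phi_succ]
  split_ifs with h
  · first
    | linear_combination (PhiStar n z a / 2) * Complex.I_mul_I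
    | linear_combination (-(PhiStar n z a) / 2) * Complex.I_mul_I
  · ring

lemma dAlpha_PhiStar_succ (n : ℕ) (z : ℂ) (k : ℕ) (a : ℕ → ℂ) :
    dAlpha k (PhiStar (n+1) z) a =
      dAlpha k (PhiStar n z) a - a n * z * dAlpha k (Phi n z) a
        - (if k = n then z * Phi n z a else 0) := by
  simp only [dAlpha, duDeriv_PhiStar_succ, dvDeriv_PhiStar_succ]
  split_ifs with h
  · first
    | linear_combination (z * Phi n z a / 2) * Complex.I_mul_I
    | linear_combination (-(z * Phi n z a) / 2) * Complex.I_mul_I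
  · ring

lemma dAlphaBar_PhiStar_succ (n : ℕ) (z : ℂ) (k : ℕ) (a : ℕ → ℂ) :
    dAlphaBar k (PhiStar (n+1) z) a =
      dAlphaBar k (PhiStar n z) a - a n * z * dAlphaBar k (Phi n z) a := by
  simp only [dAlphaBar, duDeriv_PhiStar_succ, dvDeriv_PhiStar_succ]
  split_ifs with h
  · first
    | linear_combination (z * Phi n z a / 2) * Complex.I_mul_I
    | linear_combination (-(z * Phi n z a) / 2) * Complex.I_mul_I
  · ring

lemma dAlpha_Psi_succ (n : ℕ) (z : ℂ) (k : ℕ) (a : ℕ → ℂ) :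
    dAlpha k (Psi (n+1) z) a =
      z * dAlpha k (Psi n z) a + (starRingEnd ℂ) (a n) * dAlpha k (PsiStar n z) a := by
  simp only [dAlpha, duDeriv_Psi_succ, dvDeriv_Psi_succ]
  split_ifs with h
  · first
    | linear_combination (PsiStar n z a / 2) * Complex.I_mul_I
    | linear_combination (-(PsiStar n z a) / 2) * Complex.I_mul_I
  · ring

lemma dAlphaBar_Psi_succ (n : ℕ) (z : ℂ) (k : ℕ) (a : ℕ → ℂ) :
    dAlphaBar k (Psi (n+1) z) a =
      z * dAlphaBar k (Psi n z) a + (starRingEnd ℂ) (a n) * dAlphaBar k (PsiStar n z) a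
        + (if k = n then PsiStar n z a else 0) := by
  simp only [dAlphaBar, duDeriv_Psi_succ, dvDeriv_Psi_succ]
  split_ifs with h
  · first
    | linear_combination (PsiStar n z a / 2) * Complex.I_mul_I
    | linear_combination (-(PsiStar n z a) / 2) * Complex.I_mul_I
  · ring

lemma dAlpha_PsiStar_succ (n : ℕ) (z : ℂ) (k : ℕ) (a : ℕ → ℂ) :
    dAlpha k (PsiStar (n+1) z) a =
      dAlpha k (PsiStar n z) a + a n * z * dAlpha k (Psi n z) a
        + (if k = n then z * Psi n z a else 0) := by
  simp only [dAlpha, duDeriv_PsiStar_succ, dvDeriv_PsiStar_succ]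
  split_ifs with h
  · first
    | linear_combination (z * Psi n z a / 2) * Complex.I_mul_I
    | linear_combination (-(z * Psi n z a) / 2) * Complex.I_mul_I
  · ring

lemma dAlphaBar_PsiStar_succ (n : ℕ) (z : ℂ) (k : ℕ) (a : ℕ → ℂ) :
    dAlphaBar k (PsiStar (n+1) z) a =
      dAlphaBar k (PsiStar n z) a + a n * z * dAlphaBar k (Psi n z) a := by
  simp only [dAlphaBar, duDeriv_PsiStar_succ, dvDeriv_PsiStar_succ]
  split_ifs with h
  · first
    | linear_combination (z * Psi n z a / 2) * Complex.I_mul_I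
    | linear_combination (-(z * Psi n z a) / 2) * Complex.I_mul_I
  · ring

lemma PhiP_update_of_ge (z : ℂ) : ∀ (n k : ℕ), n ≤ k → ∀ (a : ℕ → ℂ) (x : ℂ),
    PhiP n z (Function.update a k x) = PhiP n z a
  | 0, k, _, a, x => rfl
  | n+1, k, h, a, x => by
    have h' : n ≤ k := Nat.le_of_succ_le h
    have hnk : n ≠ k := Nat.ne_of_lt h
    simp [PhiP, PhiP_update_of_ge z n k h' a x, Function.update_of_ne hnk]

lemma negupd (a : ℕ → ℂ) (k : ℕ) (x : ℂ) :
    (fun j => -(Function.update a k x j)) = Function.update (fun j => -a j) k (-x) := by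
  funext j
  by_cases hj : j = k
  · subst hj; simp
  · simp [Function.update_of_ne hj]

lemma Phi_update {n k : ℕ} (z : ℂ) (h : n ≤ k) (a : ℕ → ℂ) (x : ℂ) :
    Phi n z (Function.update a k x) = Phi n z a := by
  unfold Phi; rw [PhiP_update_of_ge z n k h]
lemma PhiStar_update {n k : ℕ} (z : ℂ) (h : n ≤ k) (a : ℕ → ℂ) (x : ℂ) :
    PhiStar n z (Function.update a k x) = PhiStar n z a := by
  unfold PhiStar; rw [PhiP_update_of_ge z n k h]
lemma Psi_update {n k : ℕ} (z : ℂ) (h : n ≤ k) (a : ℕ → ℂ) (x : ℂ) :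
    Psi n z (Function.update a k x) = Psi n z a := by
  unfold Psi; rw [negupd]; exact Phi_update z h _ _
lemma PsiStar_update {n k : ℕ} (z : ℂ) (h : n ≤ k) (a : ℕ → ℂ) (x : ℂ) :
    PsiStar n z (Function.update a k x) = PsiStar n z a := by
  unfold PsiStar; rw [negupd]; exact PhiStar_update z h _ _

section zeros
variable {n k : ℕ} (z : ℂ) (a : ℕ → ℂ)

lemma duDeriv_zero_of_upd {f : (ℕ → ℂ) → ℂ} (hf : ∀ x, f (Function.update a k x) = f a) :
    duDeriv k f a = 0 := by
  have e : (fun t : ℝ => f (Function.update a k (a k + (t:ℂ)))) = fun _ => f a := by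
    funext t; exact hf _
  unfold duDeriv; rw [e]; exact deriv_const 0 _
lemma dvDeriv_zero_of_upd {f : (ℕ → ℂ) → ℂ} (hf : ∀ x, f (Function.update a k x) = f a) :
    dvDeriv k f a = 0 := by
  have e : (fun t : ℝ => f (Function.update a k (a k + (t:ℂ) * Complex.I))) = fun _ => f a := by
    funext t; exact hf _
  unfold dvDeriv; rw [e]; exact deriv_const 0 _
lemma dAlpha_zero_of_upd {f : (ℕ → ℂ) → ℂ} (hf : ∀ x, f (Function.update a k x) = f a) :
    dAlpha k f a = 0 := by
  simp [dAlpha, duDeriv_zero_of_upd a hf, dvDeriv_zero_of_upd a hf]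
lemma dAlphaBar_zero_of_upd {f : (ℕ → ℂ) → ℂ} (hf : ∀ x, f (Function.update a k x) = f a) :
    dAlphaBar k f a = 0 := by
  simp [dAlphaBar, duDeriv_zero_of_upd a hf, dvDeriv_zero_of_upd a hf]

lemma dAlpha_Phi_zero (h : n ≤ k) : dAlpha k (Phi n z) a = 0 :=
  dAlpha_zero_of_upd a fun x => Phi_update z h a x
lemma dAlphaBar_Phi_zero (h : n ≤ k) : dAlphaBar k (Phi n z) a = 0 :=
  dAlphaBar_zero_of_upd a fun x => Phi_update z h a x
lemma dAlpha_PhiStar_zero (h : n ≤ k) : dAlpha k (PhiStar n z) a = 0 :=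
  dAlpha_zero_of_upd a fun x => PhiStar_update z h a x
lemma dAlphaBar_PhiStar_zero (h : n ≤ k) : dAlphaBar k (PhiStar n z) a = 0 :=
  dAlphaBar_zero_of_upd a fun x => PhiStar_update z h a x
lemma dAlpha_Psi_zero (h : n ≤ k) : dAlpha k (Psi n z) a = 0 :=
  dAlpha_zero_of_upd a fun x => Psi_update z h a x
lemma dAlphaBar_Psi_zero (h : n ≤ k) : dAlphaBar k (Psi n z) a = 0 :=
  dAlphaBar_zero_of_upd a fun x => Psi_update z h a x
lemma dAlpha_PsiStar_zero (h : n ≤ k) : dAlpha k (PsiStar n z) a = 0 :=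
  dAlpha_zero_of_upd a fun x => PsiStar_update z h a x
lemma dAlphaBar_PsiStar_zero (h : n ≤ k) : dAlphaBar k (PsiStar n z) a = 0 :=
  dAlphaBar_zero_of_upd a fun x => PsiStar_update z h a x
end zeros

-- value recurrences
lemma Phi_succ_apply (n : ℕ) (z : ℂ) (a : ℕ → ℂ) :
    Phi (n+1) z a = z * Phi n z a - (starRingEnd ℂ) (a n) * PhiStar n z a := by
  simp [Phi, PhiStar, PhiP]
lemma PhiStar_succ_apply (n : ℕ) (z : ℂ) (a : ℕ → ℂ) :
    PhiStar (n+1) z a = PhiStar n z a - a n * z * Phi n z a := by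
  simp [Phi, PhiStar, PhiP]
lemma Psi_succ_apply (n : ℕ) (z : ℂ) (a : ℕ → ℂ) :
    Psi (n+1) z a = z * Psi n z a + (starRingEnd ℂ) (a n) * PsiStar n z a := by
  simp [Psi, PsiStar, Phi, PhiStar, PhiP]
lemma PsiStar_succ_apply (n : ℕ) (z : ℂ) (a : ℕ → ℂ) :
    PsiStar (n+1) z a = PsiStar n z a + a n * z * Psi n z a := by
  simp [Psi, PsiStar, Phi, PhiStar, PhiP]

noncomputable def sd (k : ℕ) (f g : (ℕ → ℂ) → ℂ) (a : ℕ → ℂ) : ℂ :=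
  (1 - (Complex.normSq (a k) : ℂ)) *
    (dAlphaBar k f a * dAlpha k g a - dAlpha k f a * dAlphaBar k g a)

noncomputable def pbF (N : ℕ) (f g : (ℕ → ℂ) → ℂ) (a : ℕ → ℂ) : ℂ :=
  Complex.I * ∑ k ∈ Finset.range N, sd k f g a

lemma mainInd : ∀ (n : ℕ) (z w : ℂ) (a : ℕ → ℂ),
    ((z - w) * pbF n (Phi n z) (Psi n w) a =
      Complex.I / 2 * ((w - z) * (Phi n z a * Phi n w a) + (z - w) * (Psi n z a * Psi n w a)
        + (z + w) * (Psi n z a * Phi n w a - Phi n z a * Psi n w a))) ∧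
    ((z - w) * pbF n (Phi n z) (PsiStar n w) a =
      Complex.I / 2 * (z - w) * (Phi n z a * PhiStar n w a - Phi n z a * PsiStar n w a
          + Psi n z a * PsiStar n w a)
        - Complex.I / 2 * (z + w) * (Psi n z a * PhiStar n w a)
        + Complex.I * w * (PhiStar n z a * Psi n w a)) ∧
    ((z - w) * pbF n (PhiStar n z) (Psi n w) a =
      Complex.I * z * (Phi n z a * PsiStar n w a)
        + Complex.I / 2 * (-(z - w) * (PhiStar n z a * Phi n w a)
          + (z - w) * (PhiStar n z a * Psi n w a)
          - (z + w) * (PsiStar n z a * Phi n w a)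
          - (z - w) * (PsiStar n z a * Psi n w a))) ∧
    ((z - w) * pbF n (PhiStar n z) (PsiStar n w) a =
      Complex.I / 2 * ((z - w) * (PhiStar n z a * PhiStar n w a)
        - (z + w) * (PhiStar n z a * PsiStar n w a)
        + (z + w) * (PsiStar n z a * PhiStar n w a)
        - (z - w) * (PsiStar n z a * PsiStar n w a)))
  | 0, z, w, a => by
    refine ⟨?_, ?_, ?_, ?_⟩ <;>
      · simp [pbF, Phi, PhiStar, Psi, PsiStar, PhiP]
        try ring
  | n+1, z, w, a => by
    obtain ⟨ihPQ, ihPT, ihSQ, ihST⟩ := mainInd n z w a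
    have hzP := dAlpha_Phi_zero (n := n) (k := n) z a (le_refl n)
    have hzP' := dAlphaBar_Phi_zero (n := n) (k := n) z a (le_refl n)
    have hzS := dAlpha_PhiStar_zero (n := n) (k := n) z a (le_refl n)
    have hzS' := dAlphaBar_PhiStar_zero (n := n) (k := n) z a (le_refl n)
    have hwQ := dAlpha_Psi_zero (n := n) (k := n) w a (le_refl n)
    have hwQ' := dAlphaBar_Psi_zero (n := n) (k := n) w a (le_refl n)
    have hwT := dAlpha_PsiStar_zero (n := n) (k := n) w a (le_refl n)
    have hwT' := dAlphaBar_PsiStar_zero (n := n) (k := n) w a (le_refl n)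
    have hns : ((Complex.normSq (a n) : ℂ)) = a n * (starRingEnd ℂ) (a n) :=
      (Complex.mul_conj (a n)).symm
    refine ⟨?_, ?_, ?_, ?_⟩
    · -- PQ
      have hsum : ∑ k ∈ Finset.range n, sd k (Phi (n+1) z) (Psi (n+1) w) a
          = ∑ k ∈ Finset.range n, ((z * w) * sd k (Phi n z) (Psi n w) a
              + (z * (starRingEnd ℂ) (a n)) * sd k (Phi n z) (PsiStar n w) a
              + (-((starRingEnd ℂ) (a n) * w)) * sd k (PhiStar n z) (Psi n w) a
              + (-((starRingEnd ℂ) (a n) * (starRingEnd ℂ) (a n))) * sd k (PhiStar n z) (PsiStar n w) a) := by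
        refine Finset.sum_congr rfl fun k hk => ?_
        have hkn : k ≠ n := Nat.ne_of_lt (Finset.mem_range.mp hk)
        simp only [sd, dAlpha_Phi_succ, dAlphaBar_Phi_succ, dAlpha_Psi_succ, dAlphaBar_Psi_succ,
          if_neg hkn]
        ring
      have hsd : sd n (Phi (n+1) z) (Psi (n+1) w) a = 0 := by
        simp only [sd, dAlpha_Phi_succ, dAlphaBar_Phi_succ, dAlpha_Psi_succ, dAlphaBar_Psi_succ,
          eq_self_iff_true, if_true, hzP, hzP', hzS, hzS', hwQ, hwQ', hwT, hwT']
        ring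
      have hdec : pbF (n+1) (Phi (n+1) z) (Psi (n+1) w) a
          = (z * w) * pbF n (Phi n z) (Psi n w) a
            + (z * (starRingEnd ℂ) (a n)) * pbF n (Phi n z) (PsiStar n w) a
            - ((starRingEnd ℂ) (a n) * w) * pbF n (PhiStar n z) (Psi n w) a
            - ((starRingEnd ℂ) (a n) * (starRingEnd ℂ) (a n)) * pbF n (PhiStar n z) (PsiStar n w) a := by
        unfold pbF
        rw [Finset.sum_range_succ, hsum, hsd, Finset.sum_add_distrib, Finset.sum_add_distrib,
          Finset.sum_add_distrib, ← Finset.mul_sum, ← Finset.mul_sum, ← Finset.mul_sum, ← Finset.mul_sum]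
        ring
      rw [hdec]
      simp only [Phi_succ_apply, PhiStar_succ_apply, Psi_succ_apply, PsiStar_succ_apply]
      linear_combination (z * w) * ihPQ + (z * (starRingEnd ℂ) (a n)) * ihPT
        - ((starRingEnd ℂ) (a n) * w) * ihSQ
        - ((starRingEnd ℂ) (a n) * (starRingEnd ℂ) (a n)) * ihST
    · -- PT
      have hsum : ∑ k ∈ Finset.range n, sd k (Phi (n+1) z) (PsiStar (n+1) w) a
          = ∑ k ∈ Finset.range n, (z * sd k (Phi n z) (PsiStar n w) a
              + (z * a n * w) * sd k (Phi n z) (Psi n w) a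
              + (-((starRingEnd ℂ) (a n))) * sd k (PhiStar n z) (PsiStar n w) a
              + (-(a n * (starRingEnd ℂ) (a n) * w)) * sd k (PhiStar n z) (Psi n w) a) := by
        refine Finset.sum_congr rfl fun k hk => ?_
        have hkn : k ≠ n := Nat.ne_of_lt (Finset.mem_range.mp hk)
        simp only [sd, dAlpha_Phi_succ, dAlphaBar_Phi_succ, dAlpha_PsiStar_succ,
          dAlphaBar_PsiStar_succ, if_neg hkn]
        ring
      have hsd : sd n (Phi (n+1) z) (PsiStar (n+1) w) a
          = -((1 - (Complex.normSq (a n) : ℂ)) * w * (PhiStar n z a * Psi n w a)) := by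
        simp only [sd, dAlpha_Phi_succ, dAlphaBar_Phi_succ, dAlpha_PsiStar_succ,
          dAlphaBar_PsiStar_succ, eq_self_iff_true, if_true, hzP, hzP', hzS, hzS', hwQ, hwQ', hwT, hwT']
        ring
      have hdec : pbF (n+1) (Phi (n+1) z) (PsiStar (n+1) w) a
          = z * pbF n (Phi n z) (PsiStar n w) a
            + (z * a n * w) * pbF n (Phi n z) (Psi n w) a
            - (starRingEnd ℂ) (a n) * pbF n (PhiStar n z) (PsiStar n w) a
            - (a n * (starRingEnd ℂ) (a n) * w) * pbF n (PhiStar n z) (Psi n w) a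
            + Complex.I * (-((1 - (Complex.normSq (a n) : ℂ)) * w * (PhiStar n z a * Psi n w a))) := by
        unfold pbF
        rw [Finset.sum_range_succ, hsum, hsd, Finset.sum_add_distrib, Finset.sum_add_distrib,
          Finset.sum_add_distrib, ← Finset.mul_sum, ← Finset.mul_sum, ← Finset.mul_sum, ← Finset.mul_sum]
        ring
      rw [hdec, hns]
      simp only [Phi_succ_apply, PhiStar_succ_apply, Psi_succ_apply, PsiStar_succ_apply]
      linear_combination z * ihPT + (z * a n * w) * ihPQ
        - (starRingEnd ℂ) (a n) * ihST - (a n * (starRingEnd ℂ) (a n) * w) * ihSQ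
    · -- SQ
      have hsum : ∑ k ∈ Finset.range n, sd k (PhiStar (n+1) z) (Psi (n+1) w) a
          = ∑ k ∈ Finset.range n, (w * sd k (PhiStar n z) (Psi n w) a
              + (starRingEnd ℂ) (a n) * sd k (PhiStar n z) (PsiStar n w) a
              + (-(a n * z * w)) * sd k (Phi n z) (Psi n w) a
              + (-(a n * (starRingEnd ℂ) (a n) * z)) * sd k (Phi n z) (PsiStar n w) a) := by
        refine Finset.sum_congr rfl fun k hk => ?_
        have hkn : k ≠ n := Nat.ne_of_lt (Finset.mem_range.mp hk)
        simp only [sd, dAlpha_PhiStar_succ, dAlphaBar_PhiStar_succ, dAlpha_Psi_succ,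
          dAlphaBar_Psi_succ, if_neg hkn]
        ring
      have hsd : sd n (PhiStar (n+1) z) (Psi (n+1) w) a
          = (1 - (Complex.normSq (a n) : ℂ)) * z * (Phi n z a * PsiStar n w a) := by
        simp only [sd, dAlpha_PhiStar_succ, dAlphaBar_PhiStar_succ, dAlpha_Psi_succ,
          dAlphaBar_Psi_succ, eq_self_iff_true, if_true, hzP, hzP', hzS, hzS', hwQ, hwQ', hwT, hwT']
        ring
      have hdec : pbF (n+1) (PhiStar (n+1) z) (Psi (n+1) w) a
          = w * pbF n (PhiStar n z) (Psi n w) a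
            + (starRingEnd ℂ) (a n) * pbF n (PhiStar n z) (PsiStar n w) a
            - (a n * z * w) * pbF n (Phi n z) (Psi n w) a
            - (a n * (starRingEnd ℂ) (a n) * z) * pbF n (Phi n z) (PsiStar n w) a
            + Complex.I * ((1 - (Complex.normSq (a n) : ℂ)) * z * (Phi n z a * PsiStar n w a)) := by
        unfold pbF
        rw [Finset.sum_range_succ, hsum, hsd, Finset.sum_add_distrib, Finset.sum_add_distrib,
          Finset.sum_add_distrib, ← Finset.mul_sum, ← Finset.mul_sum, ← Finset.mul_sum, ← Finset.mul_sum]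
        ring
      rw [hdec, hns]
      simp only [Phi_succ_apply, PhiStar_succ_apply, Psi_succ_apply, PsiStar_succ_apply]
      linear_combination w * ihSQ + (starRingEnd ℂ) (a n) * ihST
        - (a n * z * w) * ihPQ - (a n * (starRingEnd ℂ) (a n) * z) * ihPT
    · -- ST
      have hsum : ∑ k ∈ Finset.range n, sd k (PhiStar (n+1) z) (PsiStar (n+1) w) a
          = ∑ k ∈ Finset.range n, (sd k (PhiStar n z) (PsiStar n w) a
              + (a n * w) * sd k (PhiStar n z) (Psi n w) a
              + (-(a n * z)) * sd k (Phi n z) (PsiStar n w) a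
              + (-(a n * a n * z * w)) * sd k (Phi n z) (Psi n w) a) := by
        refine Finset.sum_congr rfl fun k hk => ?_
        have hkn : k ≠ n := Nat.ne_of_lt (Finset.mem_range.mp hk)
        simp only [sd, dAlpha_PhiStar_succ, dAlphaBar_PhiStar_succ, dAlpha_PsiStar_succ,
          dAlphaBar_PsiStar_succ, if_neg hkn]
        ring
      have hsd : sd n (PhiStar (n+1) z) (PsiStar (n+1) w) a = 0 := by
        simp only [sd, dAlpha_PhiStar_succ, dAlphaBar_PhiStar_succ, dAlpha_PsiStar_succ,
          dAlphaBar_PsiStar_succ, eq_self_iff_true, if_true, hzP, hzP', hzS, hzS', hwQ, hwQ', hwT, hwT']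
        ring
      have hdec : pbF (n+1) (PhiStar (n+1) z) (PsiStar (n+1) w) a
          = pbF n (PhiStar n z) (PsiStar n w) a
            + (a n * w) * pbF n (PhiStar n z) (Psi n w) a
            - (a n * z) * pbF n (Phi n z) (PsiStar n w) a
            - (a n * a n * z * w) * pbF n (Phi n z) (Psi n w) a := by
        unfold pbF
        rw [Finset.sum_range_succ, hsum, hsd, Finset.sum_add_distrib, Finset.sum_add_distrib,
          Finset.sum_add_distrib, ← Finset.mul_sum, ← Finset.mul_sum, ← Finset.mul_sum]
        ring
      rw [hdec]
      simp only [Phi_succ_apply, PhiStar_succ_apply, Psi_succ_apply, PsiStar_succ_apply]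
      linear_combination ihST + (a n * w) * ihSQ - (a n * z) * ihPT - (a n * a n * z * w) * ihPQ


theorem poisson_PhiStar_PsiStar (n : ℕ) (z w : ℂ) (hzw : z ≠ w) (a : ℕ → ℂ) (ha : ∀ k, ‖a k‖ < 1) :
    pb (PhiStar n z) (PsiStar n w) a =
      -(Complex.I * w / (z - w)) * (PhiStar n z a * PsiStar n w a - PhiStar n w a * PsiStar n z a)
      + Complex.I / 2 * (PhiStar n z a + PsiStar n z a) * (PhiStar n w a - PsiStar n w a) := by
  have key := (mainInd n z w a).2.2.2
  have hpb : pb (PhiStar n z) (PsiStar n w) a = pbF n (PhiStar n z) (PsiStar n w) a := by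
    unfold pb pbF sd
    congr 1
    refine tsum_eq_sum ?_
    intro k hk
    have hk' : n ≤ k := le_of_not_gt (by simpa using hk)
    rw [dAlpha_PhiStar_zero z a hk', dAlphaBar_PhiStar_zero z a hk']
    ring
  rw [hpb]
  have hzw' : z - w ≠ 0 := sub_ne_zero.mpr hzw
  apply mul_left_cancel₀ hzw'
  rw [show (z - w) * pbF n (PhiStar n z) (PsiStar n w) a =
      Complex.I / 2 * ((z - w) * (PhiStar n z a * PhiStar n w a)
        - (z + w) * (PhiStar n z a * PsiStar n w a)
        + (z + w) * (PsiStar n z a * PhiStar n w a)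
        - (z - w) * (PsiStar n z a * PsiStar n w a)) from key]
  field_simp
  ring
end
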